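/- arXiv:1401.1553 — 2 statements merged into one kernel-verified Lean document; each statement's English description precedes it below -/
import Mathlib

section
/- The Dickman function ρ is strictly positive: ρ(u) > 0 for all u ≥ 0. -/
open Set intervalIntegral Topology

/-! Differentiating the recursion gives `u ρ'(u) = -ρ(u - 1)` on `[1, ∞)`, so
`u ρ(u) - ∫_{u-1}^u ρ` has vanishing right derivative there, and it vanishes at `u = 1`. Hence
`u ρ(u) = ∫_{u-1}^u ρ` for `u ≥ 1`. At the first point `c` where `ρ` fails to be positive we have
`c > 1`, so the right side is the integral of a positive function while the left side is `≤ 0`. -/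

section

variable {E : Type*} [NormedAddCommGroup E] [NormedSpace ℝ E] [CompleteSpace E] {f : ℝ → E}

theorem ContinuousOn.hasDerivWithinAt_integral_Ici {a : ℝ} (hf : ContinuousOn f (Ici a)) :
    HasDerivWithinAt (fun u => ∫ t in a..u, f t) (f a) (Ici a) a :=
  integral_hasDerivWithinAt_right (t := Ioi a) IntervalIntegrable.refl
    ((hf.mono Ioi_subset_Ici_self).stronglyMeasurableAtFilter_nhdsWithin measurableSet_Ioi a)
    ((hf a self_mem_Ici).mono Ioi_subset_Ici_self)

theorem Continuous.hasDerivAt_integral_sliding (hf : Continuous f) (a u : ℝ) :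
    HasDerivAt (fun u => ∫ t in (u - a)..u, f t) (f u - f (u - a)) u := by
  have hsplit : (fun u => ∫ t in (u - a)..u, f t) =
      fun u => (∫ t in 0..u, f t) - ∫ t in 0..(u - a), f t := by
    funext u
    exact (integral_interval_sub_left (hf.intervalIntegrable _ _) (hf.intervalIntegrable _ _)).symm
  rw [hsplit]
  exact (hf.integral_hasStrictDerivAt 0 u).hasDerivAt.sub
    ((hf.integral_hasStrictDerivAt 0 (u - a)).hasDerivAt.comp_sub_const u a)

end

theorem ContinuousOn.exists_first_nonpos {α : Type*} [ConditionallyCompleteLinearOrder α]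
    [TopologicalSpace α] [OrderTopology α] {f : α → ℝ} {a x : α} (hf : ContinuousOn f (Icc a x))
    (hax : a ≤ x) (hx : f x ≤ 0) : ∃ c ∈ Icc a x, f c ≤ 0 ∧ ∀ y ∈ Ico a c, 0 < f y := by
  have hclosed : IsClosed (Icc a x ∩ f ⁻¹' Iic 0) :=
    hf.preimage_isClosed_of_isClosed isClosed_Icc isClosed_Iic
  obtain ⟨c, ⟨hc, hfc⟩, hleast⟩ :=
    (isCompact_Icc.of_isClosed_subset hclosed inter_subset_left).exists_isLeast
      ⟨x, right_mem_Icc.2 hax, hx⟩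
  refine ⟨c, hc, hfc, fun y hy => ?_⟩
  by_contra! hfy
  exact (hleast ⟨⟨hy.1, hy.2.le.trans hc.2⟩, hfy⟩).not_gt hy.2

namespace Dickman

variable {ρ : ℝ → ℝ}

theorem hasDerivWithinAt_Ici (hcont : ContinuousOn ρ (Ici 0))
    (hrec : ∀ u v : ℝ, 0 ≤ u - 1 → u - 1 ≤ v → v ≤ u →
      ρ u = ρ v - ∫ t in v..u, ρ (t - 1) / t)
    {x : ℝ} (hx : 1 ≤ x) : HasDerivWithinAt ρ (-(ρ (x - 1) / x)) (Ici x) x := by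
  have hg : ContinuousOn (fun t => ρ (t - 1) / t) (Ici x) :=
    (hcont.comp (continuousOn_id.sub continuousOn_const) fun t (ht : x ≤ t) =>
      show 0 ≤ t - 1 by linarith).div continuousOn_id
      fun t (ht : x ≤ t) => (show (0:ℝ) < t by linarith).ne'
  have hlocal : ∀ᶠ u in 𝓝[≥] x, ρ u = ρ x - ∫ t in x..u, ρ (t - 1) / t := by
    filter_upwards [Icc_mem_nhdsGE (by linarith : x < x + 1)] with u hu
    exact hrec u x (by linarith [hu.1]) (by linarith [hu.2]) hu.1
  simpa using ((hasDerivWithinAt_const x _ (ρ x)).sub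
    hg.hasDerivWithinAt_integral_Ici).congr_of_eventuallyEq hlocal (by simp)

theorem mul_eq_integral (hcont : ContinuousOn ρ (Ici 0)) (hinit : ∀ u ∈ Icc (0:ℝ) 1, ρ u = 1)
    (hderiv : ∀ x, 1 ≤ x → HasDerivWithinAt ρ (-(ρ (x - 1) / x)) (Ici x) x)
    {u : ℝ} (hu : 1 ≤ u) : u * ρ u = ∫ t in (u - 1)..u, ρ t := by
  -- a continuous extension of `ρ` to `ℝ`, so that sliding integrals are differentiable everywhere
  set P : ℝ → ℝ := fun t => ρ (max t 0)
  have hP : Continuous P :=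
    hcont.comp_continuous (continuous_id.max continuous_const) fun t => le_max_right t 0
  have hPρ : ∀ t, 0 ≤ t → P t = ρ t := fun t ht => by simp [P, max_eq_left ht]
  have hwindow : ∀ u, 1 ≤ u → ∫ t in (u - 1)..u, P t = ∫ t in (u - 1)..u, ρ t := fun u hu =>
    integral_congr fun t ht => hPρ t (by rw [uIcc_of_le (by linarith)] at ht; linarith [ht.1])
  set G : ℝ → ℝ := fun u => u * ρ u - ∫ t in (u - 1)..u, P t
  have hGcont : ContinuousOn G (Ici 0) :=
    (continuousOn_id.mul hcont).sub (continuous_iff_continuousAt.2 fun u =>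
      (hP.hasDerivAt_integral_sliding 1 u).continuousAt).continuousOn
  have hGderiv : ∀ x, 1 ≤ x → HasDerivWithinAt G 0 (Ici x) x := by
    intro x hx
    refine (((hasDerivWithinAt_id x _).mul (hderiv x hx)).sub
      (hP.hasDerivAt_integral_sliding 1 x).hasDerivWithinAt).congr_deriv ?_
    rw [id, hPρ x (by linarith), hPρ (x - 1) (by linarith)]
    field_simp
    ring
  have hG : G u = G 1 := constant_of_has_deriv_right_zero
    (hGcont.mono fun t ht => zero_le_one.trans ht.1) (fun x hx => hGderiv x hx.1) u ⟨hu, le_rfl⟩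
  have hG1 : G 1 = 0 := by
    have hρ_int : ∫ t in (0:ℝ)..1, ρ t = ∫ _ in (0:ℝ)..1, (1:ℝ) :=
      integral_congr fun t ht => hinit t (by rwa [uIcc_of_le zero_le_one] at ht)
    show 1 * ρ 1 - ∫ t in (1 - 1)..1, P t = 0
    rw [hwindow 1 le_rfl, sub_self, hρ_int, hinit 1 ⟨zero_le_one, le_rfl⟩]
    simp
  rw [← hwindow u hu]
  simpa [G, sub_eq_zero] using hG.trans hG1

end Dickman

theorem dickman_pos (ρ : ℝ → ℝ)
    (hcont : ContinuousOn ρ (Ici 0))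
    (hinit : ∀ u ∈ Icc (0:ℝ) 1, ρ u = 1)
    (hrec : ∀ u v : ℝ, 0 ≤ u - 1 → u - 1 ≤ v → v ≤ u →
      ρ u = ρ v - ∫ t in v..u, ρ (t - 1) / t) :
    ∀ u : ℝ, 0 ≤ u → 0 < ρ u := by
  intro u hu
  by_contra! hρu
  obtain ⟨c, ⟨hc0, -⟩, hρc, hpos⟩ :=
    (hcont.mono Icc_subset_Ici_self).exists_first_nonpos hu hρu
  have hc1 : 1 < c := by
    by_contra! hc1
    linarith [hinit c ⟨hc0, hc1⟩]
  have hintegral_pos : 0 < ∫ t in (c - 1)..c, ρ t :=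
    intervalIntegral_pos_of_pos_on
      ((hcont.mono fun t ht => mem_Ici.2 (by linarith [ht.1])).intervalIntegrable_of_Icc
        (by linarith))
      (fun t ht => hpos t ⟨by linarith [ht.1], ht.2⟩) (by linarith)
  have hidentity := Dickman.mul_eq_integral hcont hinit
    (fun x hx => Dickman.hasDerivWithinAt_Ici hcont hrec hx) hc1.le
  linarith [mul_nonpos_of_nonneg_of_nonpos hc0 hρc]
end

section
/- Assume Dickman's theorem: Ψ(x, x^{1/u})/x → ρ(u) uniformly for u in compact subsets of (0,∞). Fix k ≥ 1, ε ∈ (0,1), and a closed box B = ∏[t_i, t_i+Δt_i] ⊂ U = {t_1 > ... > t_k > 0, ∑t_i < 1} with (k/(2ε))·diam(B) < d(B,U^c). Let N be uniform on {1,...,n} and X_n = (log_n P_1(N),...,log_n P_k(N)). Then liminf_{n→∞} P(X_n ∈ B) ≥ (1−ε)·∏_{i=1}^k (Δt_i/t_i) · ρ((1−∑t_i)/t_k). -/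
open Filter Set Finset

/-- `Pfac i m` is the `(i+1)`-st largest prime factor of `m`, counted with
multiplicity, with value `1` if `m` has at most `i` prime factors. -/
def Pfac (i m : ℕ) : ℕ := (m.primeFactorsList.reverse).getD i 1

/-- `Psi x y` counts the positive integers `≤ x` all of whose prime factors are `≤ y`. -/
noncomputable def Psi (x y : ℝ) : ℕ :=
  {m : ℕ | 1 ≤ m ∧ (m : ℝ) ≤ x ∧ ∀ p : ℕ, p.Prime → p ∣ m → (p : ℝ) ≤ y}.ncard

/-- Distance between two subsets of a metric space. -/
noncomputable def setDist {E : Type*} [PseudoMetricSpace E] (A B : Set E) : ℝ :=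
  sInf (Set.image2 dist A B)

/-!
If `pᵢ ∈ (n^{tᵢ}, n^{tᵢ+Δtᵢ}]` are primes and `s ≤ n / ∏ pᵢ` has no prime factor above
`n^{t_k}`, then `m = s · ∏ pᵢ ≤ n` has `Pᵢ(m) = pᵢ`, and `(p, s)` is recovered from `m`.
For each tuple, `log (n / ∏ pᵢ) / log n^{t_k}` lies in a compact interval of `(0, ∞)` whose right
end is `u = (1 - ∑ tᵢ) / t_k`, so uniformity in Dickman's theorem and monotonicity of `ρ` give
at least `(ρ(u) - δ) · n / ∏ pᵢ` such `s`. Summing over tuples, the mass `∑ ∏ 1/pᵢ` factors as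
`∏ᵢ ∑ 1/pᵢ`, which tends to `∏ log (1 + Δtᵢ/tᵢ)` by Mertens.
The separation hypothesis bounds `Δtᵢ/tᵢ ≤ 2ε/k`, whence `log (1 + Δtᵢ/tᵢ) ≥ (Δtᵢ/tᵢ)/(1 + ε/k)`,
and `(1 - ε)(1 + ε/k)^k ≤ (1 - ε) e^ε ≤ 1`.
-/

open Real Topology

theorem one_sub_mul_prod_le_prod_log_one_add {ι : Type*} [Fintype ι] {ε : ℝ} (hε : 0 ≤ ε)
    {r : ι → ℝ} (hr0 : ∀ i, 0 ≤ r i) (hr : ∀ i, Fintype.card ι * r i ≤ 2 * ε) :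
    (1 - ε) * ∏ i, r i ≤ ∏ i, log (1 + r i) := by
  set k := Fintype.card ι
  have hexp : (1 + ε / k) ^ k ≤ exp ε := by
    simpa [sub_neg_eq_add, neg_div] using
      one_sub_div_pow_le_exp_neg (n := k) (t := -ε) (by linarith [k.cast_nonneg (α := ℝ)])
  have hfactor : ∀ i, r i / (1 + ε / k) ≤ log (1 + r i) := fun i => by
    have hk : (0 : ℝ) < k := Nat.cast_pos.2 (Fintype.card_pos_iff.2 ⟨i⟩)
    have hri : r i ≤ 2 * ε / k := by rw [le_div_iff₀ hk]; linarith [hr i]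
    calc r i / (1 + ε / k) ≤ 2 * r i / (r i + 2) := by
          rw [div_le_div_iff₀ (by positivity) (by linarith [hr0 i])]
          calc r i * (r i + 2) = r i * r i + 2 * r i := by ring
            _ ≤ r i * (2 * ε / k) + 2 * r i := by gcongr; exact hr0 i
            _ = 2 * r i * (1 + ε / k) := by ring
      _ ≤ log (1 + r i) := le_log_one_add_of_nonneg (hr0 i)
  calc (1 - ε) * ∏ i, r i ≤ ((1 + ε / k) ^ k)⁻¹ * ∏ i, r i := by
        gcongr
        · exact prod_nonneg fun i _ => hr0 i
        · calc 1 - ε ≤ exp (-ε) := one_sub_le_exp_neg ε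
            _ = (exp ε)⁻¹ := exp_neg ε
            _ ≤ ((1 + ε / k) ^ k)⁻¹ := inv_anti₀ (by positivity) hexp
    _ = ∏ i, r i / (1 + ε / k) := by
        rw [prod_div_distrib, prod_const, card_univ, inv_mul_eq_div]
    _ ≤ ∏ i, log (1 + r i) :=
        prod_le_prod (fun i _ => div_nonneg (hr0 i) (by positivity)) fun i _ => hfactor i

theorem Pfac_mul_prod {k s : ℕ} {p : Fin k → ℕ} (hp : ∀ i, (p i).Prime) (hanti : StrictAnti p)
    (hs : s ≠ 0) (hsmall : ∀ q ∈ s.primeFactorsList, ∀ i, q < p i) (i : Fin k) :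
    Pfac i (s * ∏ j, p j) = p i := by
  have hfactors :
      s.primeFactorsList ++ (List.ofFn p).reverse = (s * ∏ j, p j).primeFactorsList := by
    refine List.Perm.eq_of_sortedLE ?_ (Nat.primeFactorsList_sorted _)
      (Nat.primeFactorsList_unique ?_ ?_)
    · rw [List.sortedLE_iff_pairwise, List.pairwise_append, List.pairwise_reverse,
        List.pairwise_ofFn]
      refine ⟨(Nat.primeFactorsList_sorted s).pairwise, fun a b hab => (hanti hab).le, ?_⟩
      rintro q hq _ hp'
      obtain ⟨j, rfl⟩ := List.mem_ofFn.1 (List.mem_reverse.1 hp')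
      exact (hsmall q hq j).le
    · rw [List.prod_append, List.prod_reverse, List.prod_ofFn, Nat.prod_primeFactorsList hs]
    · intro q hq
      rcases List.mem_append.1 hq with hq | hq
      · exact Nat.prime_of_mem_primeFactorsList hq
      · obtain ⟨j, rfl⟩ := List.mem_ofFn.1 (List.mem_reverse.1 hq)
        exact hp j
  have hlen : (i : ℕ) < (List.ofFn p).length := by simp
  rw [Pfac, ← hfactors, List.reverse_append, List.reverse_reverse, List.getD_append _ _ _ _ hlen,
    List.getD_eq_getElem _ _ hlen, List.getElem_ofFn]

theorem Psi_eq_card (x y : ℝ) :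
    Psi x y = #{s ∈ Icc 1 ⌊x⌋₊ | ∀ q : ℕ, q ∈ s.primeFactorsList → (q : ℝ) ≤ y} := by
  rw [Psi, ← Set.ncard_coe_finset]
  congr 1
  ext m
  simp only [coe_filter, Finset.mem_Icc, Set.mem_ofPred_eq]
  constructor
  · rintro ⟨h1, hx, hy⟩
    exact ⟨⟨h1, (Nat.le_floor_iff' (by omega)).2 hx⟩, fun q hq =>
      hy q (Nat.prime_of_mem_primeFactorsList hq) (Nat.dvd_of_mem_primeFactorsList hq)⟩
  · rintro ⟨⟨h1, hx⟩, hy⟩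
    exact ⟨h1, (Nat.le_floor_iff' (by omega)).1 hx, fun q hq hqm =>
      hy q ((Nat.mem_primeFactorsList (by omega)).2 ⟨hq, hqm⟩)⟩

noncomputable def primesIoc (x y : ℝ) : Finset ℕ := Nat.primesLE ⌊y⌋₊ \ Nat.primesLE ⌊x⌋₊

theorem mem_primesIoc {x y : ℝ} {q : ℕ} : q ∈ primesIoc x y ↔ q.Prime ∧ x < q ∧ q ≤ y := by
  rw [primesIoc, Finset.mem_sdiff, Nat.mem_primesLE, Nat.mem_primesLE]
  constructor
  · rintro ⟨⟨hqy, hq⟩, hqx⟩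
    exact ⟨hq, (Nat.floor_lt' hq.ne_zero).1 (not_le.1 fun h => hqx ⟨h, hq⟩),
      (Nat.le_floor_iff' hq.ne_zero).1 hqy⟩
  · rintro ⟨hq, hxq, hqy⟩
    exact ⟨⟨(Nat.le_floor_iff' hq.ne_zero).2 hqy, hq⟩,
      fun h => (Nat.floor_lt' hq.ne_zero).2 hxq |>.not_ge h.1⟩

theorem logb_mem_Icc_of_mem_primesIoc {b a c : ℝ} (hb : 1 < b) {q : ℕ}
    (hq : q ∈ primesIoc (b ^ a) (b ^ c)) : logb b q ∈ Icc a c := by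
  obtain ⟨hq, haq, hqc⟩ := mem_primesIoc.1 hq
  have hq0 : (0 : ℝ) < q := Nat.cast_pos.2 hq.pos
  exact ⟨(le_logb_iff_rpow_le hb hq0).2 haq.le, (logb_le_iff_le_rpow hb hq0).2 hqc⟩

theorem sum_Psi_le_card_Pfac_mem {k : ℕ} (W : Fin k → Finset ℕ) {y : ℝ} (n : ℕ)
    (hW : ∀ i, ∀ p ∈ W i, p.Prime ∧ y < p)
    (hanti : ∀ i j, i < j → ∀ p ∈ W i, ∀ q ∈ W j, q < p) :
    ∑ p ∈ Fintype.piFinset W, Psi (n / ∏ i, (p i : ℝ)) y ≤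
      #{m ∈ Icc 1 n | ∀ i, Pfac i m ∈ W i} := by
  simp_rw [Psi_eq_card, ← card_sigma]
  set T := (Fintype.piFinset W).sigma fun p =>
    {s ∈ Icc 1 ⌊(n : ℝ) / ∏ i, (p i : ℝ)⌋₊ | ∀ q : ℕ, q ∈ s.primeFactorsList → (q : ℝ) ≤ y}
  have hPfac : ∀ ps ∈ T, ∀ i : Fin k, Pfac i (ps.2 * ∏ j, ps.1 j) = ps.1 i := by
    rintro ⟨p, s⟩ hps
    simp only [T, mem_sigma, Fintype.mem_piFinset, mem_filter, Finset.mem_Icc] at hps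
    obtain ⟨hp, ⟨hs, -⟩, hsmooth⟩ := hps
    refine Pfac_mul_prod (fun i => (hW i _ (hp i)).1)
      (fun i j hij => hanti i j hij _ (hp i) _ (hp j)) (Nat.one_le_iff_ne_zero.1 hs) fun q hq i => ?_
    exact_mod_cast (hsmooth q hq).trans_lt (hW i _ (hp i)).2
  refine card_le_card_of_injOn (fun ps => ps.2 * ∏ j, ps.1 j) (fun ps hps => ?_) ?_
  · have hps' := hps
    obtain ⟨p, s⟩ := ps
    simp only [T, coe_sigma, Set.mem_sigma_iff, mem_coe, Fintype.mem_piFinset, mem_filter,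
      Finset.mem_Icc] at hps'
    obtain ⟨hp, ⟨hs, hsn⟩, -⟩ := hps'
    have hprod : (0 : ℝ) < ∏ i, (p i : ℝ) :=
      prod_pos fun i _ => Nat.cast_pos.2 (hW i _ (hp i)).1.pos
    have hle : (s : ℝ) * ∏ i, (p i : ℝ) ≤ n := by
      rw [← le_div_iff₀ hprod]
      exact (Nat.le_floor_iff' (by omega)).1 hsn
    simp only [mem_coe, mem_filter, Finset.mem_Icc, hPfac _ hps]
    refine ⟨⟨Nat.one_le_iff_ne_zero.2 ?_, by exact_mod_cast hle⟩, hp⟩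
    exact mul_ne_zero (by omega) (prod_ne_zero_iff.2 fun i _ => (hW i _ (hp i)).1.ne_zero)
  · rintro ⟨p, s⟩ hps ⟨p', s'⟩ hps' heq
    have hpp : p = p' := funext fun i =>
      (hPfac _ hps i).symm.trans ((congrArg (Pfac i) heq).trans (hPfac _ hps' i))
    subst hpp
    simp only at heq
    simp only [T, coe_sigma, Set.mem_sigma_iff, mem_coe, Fintype.mem_piFinset] at hps
    have hprod : ∏ j, p j ≠ 0 := prod_ne_zero_iff.2 fun i _ => (hW i _ (hps.1 i)).1.ne_zero
    rw [Nat.eq_of_mul_eq_mul_right (Nat.pos_of_ne_zero hprod) heq]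

theorem tendsto_sum_one_div_primesIoc_rpow {c₀ : ℝ}
    (mertens : Tendsto (fun x : ℝ =>
      ∑ p ∈ Nat.primesLE ⌊x⌋₊, (1 : ℝ) / p - c₀ - log (log x)) atTop (𝓝 0))
    {a b : ℝ} (ha : 0 < a) (hab : a ≤ b) :
    Tendsto (fun x : ℝ => ∑ q ∈ primesIoc (x ^ a) (x ^ b), (1 : ℝ) / q) atTop
      (𝓝 (log (b / a))) := by
  set E : ℝ → ℝ := fun x => ∑ p ∈ Nat.primesLE ⌊x⌋₊, (1 : ℝ) / p - c₀ - log (log x)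
  have hb : 0 < b := ha.trans_le hab
  have hlim : Tendsto (fun x : ℝ => E (x ^ b) - E (x ^ a) + log (b / a)) atTop
      (𝓝 (log (b / a))) := by
    simpa using ((mertens.comp (tendsto_rpow_atTop hb)).sub
      (mertens.comp (tendsto_rpow_atTop ha))).add_const (log (b / a))
  refine hlim.congr' ?_
  filter_upwards [eventually_gt_atTop 1] with x hx
  have hlog : 0 < log x := log_pos hx
  have hsub : Nat.primesLE ⌊x ^ a⌋₊ ⊆ Nat.primesLE ⌊x ^ b⌋₊ := fun q hq => by
    rw [Nat.mem_primesLE] at hq ⊢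
    exact ⟨hq.1.trans (Nat.floor_mono (rpow_le_rpow_of_exponent_le hx.le hab)), hq.2⟩
  simp only [E, primesIoc, sum_sdiff_eq_sub hsub, log_rpow (zero_lt_one.trans hx),
    log_mul ha.ne' hlog.ne', log_mul hb.ne' hlog.ne', log_div hb.ne' ha.ne']
  ring

theorem eventually_mul_le_Psi {ρ : ℝ → ℝ} {u₀ u₁ δ : ℝ} (hρ : AntitoneOn ρ (Ici 0))
    (hu₀ : 0 < u₀)
    (dickman : TendstoUniformlyOn (fun (x : ℝ) (u : ℝ) => (Psi x (x ^ (1 / u)) : ℝ) / x)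
      ρ atTop (Icc u₀ u₁))
    (hδ : 0 < δ) :
    ∀ᶠ x in atTop, ∀ y : ℝ, 0 < y → log x / log y ∈ Icc u₀ u₁ → (ρ u₁ - δ) * x ≤ Psi x y := by
  filter_upwards [Metric.tendstoUniformlyOn_iff.1 dickman δ hδ, eventually_gt_atTop 0]
    with x hclose hx y hy hu
  set u := log x / log y
  have hu0 : 0 < u := hu₀.trans_le hu.1
  have hlogx : log x ≠ 0 := fun h => hu0.ne' (by simp [u, h])
  have hxy : x ^ (1 / u) = y := by
    rw [one_div_div]
    exact rpow_logb hx (fun h => hlogx (by simp [h])) hy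
  have hρu : ρ u₁ ≤ ρ u := hρ hu0.le (hu0.le.trans hu.2) hu.2
  have hdist := hclose u hu
  rw [hxy, Real.dist_eq, abs_lt] at hdist
  have hlt : ρ u₁ - δ < Psi x y / x := by linarith [hdist.2]
  exact ((lt_div_iff₀ hx).1 hlt).le

theorem logb_div_prod_mem_Icc {k : ℕ} {t Δt : Fin k → ℝ} {b : ℝ} (hb : 1 < b) {p : Fin k → ℕ}
    (hp : p ∈ Fintype.piFinset fun i => primesIoc (b ^ t i) (b ^ (t i + Δt i))) :
    logb b (b / ∏ i, (p i : ℝ)) ∈ Icc (1 - ∑ i, (t i + Δt i)) (1 - ∑ i, t i) := by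
  rw [Fintype.mem_piFinset] at hp
  have hpos : ∀ i, (p i : ℝ) ≠ 0 := fun i =>
    Nat.cast_ne_zero.2 (mem_primesIoc.1 (hp i)).1.ne_zero
  have hbounds := fun i => logb_mem_Icc_of_mem_primesIoc hb (hp i)
  rw [logb_div (by positivity) (prod_ne_zero_iff.2 fun i _ => hpos i), logb_self_eq_one hb,
    logb_prod _ _ fun i _ => hpos i]
  exact ⟨by linarith [sum_le_sum fun i (_ : i ∈ Finset.univ) => (hbounds i).2],
    by linarith [sum_le_sum fun i (_ : i ∈ Finset.univ) => (hbounds i).1]⟩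

theorem mul_prod_sum_one_div {ι : Type*} [Fintype ι] [DecidableEq ι] (W : ι → Finset ℕ) (x : ℝ) :
    x * ∏ i, ∑ q ∈ W i, (1 : ℝ) / q = ∑ p ∈ Fintype.piFinset W, x / ∏ i, (p i : ℝ) := by
  rw [prod_univ_sum, mul_sum]
  refine sum_congr rfl fun p _ => ?_
  rw [prod_div_distrib, prod_const_one, mul_one_div]

/-- `n · P(X_n ∈ B)` for `N` uniform on `{1, …, n}` and `B = ∏ᵢ [tᵢ, tᵢ + Δtᵢ]`. -/
noncomputable def boxCount {k : ℕ} (t Δt : Fin k → ℝ) (n : ℕ) : ℕ :=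
  ((Finset.Icc 1 n).filter (fun m => ∀ i : Fin k,
    t i ≤ Real.log (Pfac i m) / Real.log n ∧
    Real.log (Pfac i m) / Real.log n ≤ t i + Δt i)).card

theorem boxCount_le {k : ℕ} (t Δt : Fin k → ℝ) (n : ℕ) : boxCount t Δt n ≤ n :=
  (card_filter_le _ _).trans (Nat.card_Icc 1 n).le

theorem eventually_mul_prod_sum_le_boxCount {k : ℕ} {ρ : ℝ → ℝ} {t Δt : Fin k → ℝ}
    {tmin δ : ℝ} (hρ : AntitoneOn ρ (Ici 0)) (htmin : 0 < tmin) (htmin_le : ∀ i, tmin ≤ t i)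
    (horder : ∀ i j, i < j → t j + Δt j ≤ t i) (hsum : ∑ i, (t i + Δt i) < 1)
    (dickman : TendstoUniformlyOn (fun (x : ℝ) (u : ℝ) => (Psi x (x ^ (1 / u)) : ℝ) / x) ρ atTop
      (Icc ((1 - ∑ i, (t i + Δt i)) / tmin) ((1 - ∑ i, t i) / tmin)))
    (hδ : 0 < δ) :
    ∀ᶠ n : ℕ in atTop, (ρ ((1 - ∑ i, t i) / tmin) - δ) *
      ∏ i, ∑ q ∈ primesIoc ((n : ℝ) ^ t i) ((n : ℝ) ^ (t i + Δt i)), (1 : ℝ) / q ≤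
        boxCount t Δt n / n := by
  have hc : 0 < 1 - ∑ i, (t i + Δt i) := sub_pos.2 hsum
  obtain ⟨X, hX⟩ := eventually_atTop.1 (eventually_mul_le_Psi hρ (div_pos hc htmin) dickman hδ)
  have hpow : Tendsto (fun n : ℕ => (n : ℝ) ^ (1 - ∑ i, (t i + Δt i))) atTop atTop :=
    (tendsto_rpow_atTop hc).comp tendsto_natCast_atTop_atTop
  filter_upwards [eventually_ge_atTop 2, hpow.eventually_ge_atTop X] with n hn hnX
  have hn1 : (1 : ℝ) < n := by exact_mod_cast hn
  set W : Fin k → Finset ℕ := fun i => primesIoc ((n : ℝ) ^ t i) ((n : ℝ) ^ (t i + Δt i))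
  have hW : ∀ i, ∀ p ∈ W i, p.Prime ∧ (n : ℝ) ^ tmin < p := fun i p hp => by
    obtain ⟨hp, hlt, -⟩ := mem_primesIoc.1 hp
    exact ⟨hp, (rpow_le_rpow_of_exponent_le hn1.le (htmin_le i)).trans_lt hlt⟩
  have hanti : ∀ i j, i < j → ∀ p ∈ W i, ∀ q ∈ W j, q < p := fun i j hij p hp q hq => by
    have hqp : (q : ℝ) < p := (mem_primesIoc.1 hq).2.2.trans_lt <|
      (rpow_le_rpow_of_exponent_le hn1.le (horder i j hij)).trans_lt (mem_primesIoc.1 hp).2.1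
    exact_mod_cast hqp
  have hPsi : ∀ p ∈ Fintype.piFinset W,
      (ρ ((1 - ∑ i, t i) / tmin) - δ) * (n / ∏ i, (p i : ℝ)) ≤
        Psi (n / ∏ i, (p i : ℝ)) ((n : ℝ) ^ tmin) := fun p hp => by
    have hθ := logb_div_prod_mem_Icc hn1 hp
    have hx : 0 < (n : ℝ) / ∏ i, (p i : ℝ) :=
      div_pos (by positivity) (prod_pos fun i _ =>
        Nat.cast_pos.2 (hW i _ (Fintype.mem_piFinset.1 hp i)).1.pos)
    refine hX _ (hnX.trans ((le_logb_iff_rpow_le hn1 hx).1 hθ.1)) _ (by positivity) ?_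
    rw [log_rpow (by positivity), div_mul_eq_div_div_swap]
    exact ⟨div_le_div_of_nonneg_right hθ.1 htmin.le, div_le_div_of_nonneg_right hθ.2 htmin.le⟩
  have hcount : #{m ∈ Icc 1 n | ∀ i, Pfac i m ∈ W i} ≤ boxCount t Δt n :=
    card_le_card <| monotone_filter_right _ fun m _ hm i =>
      logb_mem_Icc_of_mem_primesIoc hn1 (hm i)
  rw [le_div_iff₀ (by positivity), mul_assoc, mul_comm _ (n : ℝ), mul_prod_sum_one_div, mul_sum]
  calc ∑ p ∈ Fintype.piFinset W, (ρ ((1 - ∑ i, t i) / tmin) - δ) * (n / ∏ i, (p i : ℝ))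
      ≤ ∑ p ∈ Fintype.piFinset W, (Psi (n / ∏ i, (p i : ℝ)) ((n : ℝ) ^ tmin) : ℝ) :=
        sum_le_sum hPsi
    _ ≤ boxCount t Δt n := by
        exact_mod_cast (sum_Psi_le_card_Pfac_mem W n hW hanti).trans hcount

theorem mul_prod_log_le_liminf_boxCount {k : ℕ} {ρ : ℝ → ℝ} {t Δt : Fin k → ℝ} {tmin c₀ : ℝ}
    (hρ : AntitoneOn ρ (Ici 0)) (htmin : 0 < tmin) (htmin_le : ∀ i, tmin ≤ t i)
    (hΔt : ∀ i, 0 ≤ Δt i) (horder : ∀ i j, i < j → t j + Δt j ≤ t i)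
    (hsum : ∑ i, (t i + Δt i) < 1)
    (dickman : TendstoUniformlyOn (fun (x : ℝ) (u : ℝ) => (Psi x (x ^ (1 / u)) : ℝ) / x) ρ atTop
      (Icc ((1 - ∑ i, (t i + Δt i)) / tmin) ((1 - ∑ i, t i) / tmin)))
    (mertens : Tendsto (fun x : ℝ =>
      ∑ p ∈ Nat.primesLE ⌊x⌋₊, (1 : ℝ) / p - c₀ - log (log x)) atTop (𝓝 0)) :
    ρ ((1 - ∑ i, t i) / tmin) * ∏ i, log ((t i + Δt i) / t i) ≤
      atTop.liminf fun n : ℕ => (boxCount t Δt n : ℝ) / n := by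
  set ρ₁ := ρ ((1 - ∑ i, t i) / tmin)
  have hσ : Tendsto (fun n : ℕ =>
      ∏ i, ∑ q ∈ primesIoc ((n : ℝ) ^ t i) ((n : ℝ) ^ (t i + Δt i)), (1 : ℝ) / q) atTop
      (𝓝 (∏ i, log ((t i + Δt i) / t i))) :=
    tendsto_finsetProd _ fun i _ => (tendsto_sum_one_div_primesIoc_rpow mertens
      (htmin.trans_le (htmin_le i)) (le_add_of_nonneg_right (hΔt i))).comp
      tendsto_natCast_atTop_atTop
  have hcobdd : IsCoboundedUnder (· ≥ ·) atTop fun n : ℕ => (boxCount t Δt n : ℝ) / n :=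
    (isBoundedUnder_of ⟨1, fun n => div_le_one_of_le₀ (by exact_mod_cast boxCount_le t Δt n)
      n.cast_nonneg⟩).isCoboundedUnder_ge
  have hδ : ∀ δ > 0, (ρ₁ - δ) * ∏ i, log ((t i + Δt i) / t i) ≤
      atTop.liminf fun n : ℕ => (boxCount t Δt n : ℝ) / n := fun δ hδ => by
    rw [← ((hσ.const_mul (ρ₁ - δ)).liminf_eq)]
    exact liminf_le_liminf (eventually_mul_prod_sum_le_boxCount hρ htmin htmin_le horder hsum
      dickman hδ) (hσ.const_mul _).isBoundedUnder_ge hcobdd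
  have hlim : Tendsto (fun δ => (ρ₁ - δ) * ∏ i, log ((t i + Δt i) / t i)) (𝓝[>] 0)
      (𝓝 (ρ₁ * ∏ i, log ((t i + Δt i) / t i))) := by
    have hcont : Continuous fun δ : ℝ => (ρ₁ - δ) * ∏ i, log ((t i + Δt i) / t i) := by fun_prop
    simpa using (hcont.tendsto 0).mono_left nhdsWithin_le_nhds
  exact le_of_tendsto hlim (eventually_nhdsWithin_of_forall hδ)

theorem setDist_le_dist {E : Type*} [PseudoMetricSpace E] {A B : Set E} {a b : E} (ha : a ∈ A)
    (hb : b ∈ B) : setDist A B ≤ dist a b :=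
  csInf_le ⟨0, by rintro _ ⟨x, -, y, -, rfl⟩; exact dist_nonneg⟩ (mem_image2_of_mem ha hb)

section Box

variable {ι : Type*} {t Δt : ι → ℝ}

theorem left_mem_pi_Icc (hΔt : ∀ i, 0 ≤ Δt i) : t ∈ univ.pi fun i => Icc (t i) (t i + Δt i) :=
  fun i _ => left_mem_Icc.2 (le_add_of_nonneg_right (hΔt i))

theorem right_mem_pi_Icc (hΔt : ∀ i, 0 ≤ Δt i) :
    (fun i => t i + Δt i) ∈ univ.pi fun i => Icc (t i) (t i + Δt i) :=
  fun i _ => right_mem_Icc.2 (le_add_of_nonneg_right (hΔt i))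

theorem update_mem_pi_Icc [DecidableEq ι] (hΔt : ∀ i, 0 ≤ Δt i) (j : ι) :
    Function.update t j (t j + Δt j) ∈ univ.pi fun i => Icc (t i) (t i + Δt i) := by
  intro i _
  rcases eq_or_ne i j with rfl | hij
  · simp [hΔt i]
  · simp [hij, hΔt i]

theorem le_diam_pi_Icc [Fintype ι] (hΔt : ∀ i, 0 ≤ Δt i) (i : ι) :
    Δt i ≤ Metric.diam (univ.pi fun i => Icc (t i) (t i + Δt i)) := by
  have hbdd : Bornology.IsBounded (univ.pi fun i => Icc (t i) (t i + Δt i)) := by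
    rw [pi_univ_Icc]
    exact Metric.isBounded_Icc _ _
  calc Δt i = dist (t i + Δt i) (t i) := by simp [abs_of_nonneg (hΔt i)]
    _ ≤ dist (fun i => t i + Δt i) t := dist_le_pi_dist (fun i => t i + Δt i) t i
    _ ≤ _ := Metric.dist_le_diam_of_mem hbdd (right_mem_pi_Icc hΔt) (left_mem_pi_Icc hΔt)

theorem add_lt_of_pi_Icc_subset [LinearOrder ι] (hΔt : ∀ i, 0 ≤ Δt i)
    (hsub : (univ.pi fun i => Icc (t i) (t i + Δt i)) ⊆ {x | StrictAnti x}) {i j : ι}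
    (hij : i < j) : t j + Δt j < t i := by
  simpa [hij.ne] using hsub (update_mem_pi_Icc hΔt j) hij

theorem mul_div_le_of_diam_lt_setDist [Fintype ι] [DecidableEq ι] {c ε : ℝ} (hc : 0 ≤ c)
    (hε : 0 < ε) (hΔt : ∀ i, 0 ≤ Δt i) {S : Set (ι → ℝ)}
    (hsep : (c / (2 * ε)) * Metric.diam (univ.pi fun i => Icc (t i) (t i + Δt i)) <
      setDist (univ.pi fun i => Icc (t i) (t i + Δt i)) Sᶜ)
    {j : ι} (hS : S ⊆ {x | 0 < x j}) (htj : 0 < t j) (hj : ∀ i, t j ≤ t i) (i : ι) :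
    c * (Δt i / t i) ≤ 2 * ε := by
  have hupdate : Function.update t j 0 ∈ Sᶜ := fun h => by simpa using hS h
  have hdist : dist t (Function.update t j 0) ≤ t j := by
    refine (dist_pi_le_iff htj.le).2 fun l => ?_
    rcases eq_or_ne l j with rfl | hl
    · simp [abs_of_pos htj]
    · simp [hl, htj.le]
  have hlt : c / (2 * ε) * Δt i < t i :=
    (mul_le_mul_of_nonneg_left (le_diam_pi_Icc hΔt i) (by positivity)).trans_lt <|
      hsep.trans_le <| ((setDist_le_dist (left_mem_pi_Icc hΔt) hupdate).trans hdist).trans (hj i)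
  rw [div_mul_eq_mul_div, div_lt_iff₀ (by positivity)] at hlt
  rw [mul_div_assoc', div_le_iff₀ (htj.trans_le (hj i))]
  linarith

end Box

open Classical in
theorem box_liminf_lower_bound_general (k : ℕ) (hk : 0 < k)
    (ρ : ℝ → ℝ)
    (hρpos : ∀ u : ℝ, 0 ≤ u → 0 < ρ u) (hρanti : AntitoneOn ρ (Ici 0))
    (dickman : ∀ K : Set ℝ, K ⊆ Ioi 0 → IsCompact K →
      TendstoUniformlyOn (fun (x : ℝ) (u : ℝ) => (Psi x (x ^ (1 / u)) : ℝ) / x)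
        ρ atTop K)
    (c₀ : ℝ)
    (mertens : Tendsto (fun x : ℝ =>
        (∑ p ∈ (Finset.range (⌊x⌋₊ + 1)).filter Nat.Prime, (1 : ℝ) / p)
          - c₀ - Real.log (Real.log x)) atTop (nhds 0))
    (ε : ℝ) (hε0 : 0 < ε)
    (t Δt : Fin k → ℝ) (hΔt : ∀ i, 0 ≤ Δt i)
    (U : Set (Fin k → ℝ))
    (hU : U = {x | (∀ i j : Fin k, i < j → x j < x i) ∧
        0 < x ⟨k - 1, Nat.sub_lt hk one_pos⟩ ∧ (∑ i, x i) < 1})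
    (B : Set (Fin k → ℝ)) (hB : B = univ.pi fun i => Icc (t i) (t i + Δt i))
    (hBU : B ⊆ U)
    (hsep : (k / (2 * ε)) * Metric.diam B < setDist B Uᶜ) :
    (1 - ε) * (∏ i, Δt i / t i)
        * ρ ((1 - ∑ i, t i) / t ⟨k - 1, Nat.sub_lt hk one_pos⟩) ≤
      atTop.liminf (fun n : ℕ =>
        (((Finset.Icc 1 n).filter (fun m => ∀ i : Fin k,
            t i ≤ Real.log (Pfac i m) / Real.log n ∧
            Real.log (Pfac i m) / Real.log n ≤ t i + Δt i)).card : ℝ) / n) := by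
  subst hU hB
  set last : Fin k := ⟨k - 1, Nat.sub_lt hk one_pos⟩
  have htmin : 0 < t last := (hBU (left_mem_pi_Icc hΔt)).2.1
  have htmin_le : ∀ i, t last ≤ t i := fun i =>
    StrictAnti.antitone (hBU (left_mem_pi_Icc hΔt)).1 (Fin.le_def.2 (Nat.le_sub_one_of_lt i.2))
  have htpos : ∀ i, 0 < t i := fun i => htmin.trans_le (htmin_le i)
  have hsum : ∑ i, (t i + Δt i) < 1 := (hBU (right_mem_pi_Icc hΔt)).2.2
  have horder : ∀ i j, i < j → t j + Δt j ≤ t i := fun i j hij =>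
    (add_lt_of_pi_Icc_subset hΔt (hBU.trans fun x hx => hx.1) hij).le
  have hratio : ∀ i, (k : ℝ) * (Δt i / t i) ≤ 2 * ε :=
    mul_div_le_of_diam_lt_setDist k.cast_nonneg hε0 hΔt hsep (fun x hx => hx.2.1) htmin htmin_le
  have hu : 0 < (1 - ∑ i, (t i + Δt i)) / t last := div_pos (sub_pos.2 hsum) htmin
  have hρ₁ : 0 ≤ ρ ((1 - ∑ i, t i) / t last) := (hρpos _ <| hu.le.trans <| by
    gcongr with i
    exact le_add_of_nonneg_right (hΔt i)).le
  calc (1 - ε) * (∏ i, Δt i / t i) * ρ ((1 - ∑ i, t i) / t last)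
      ≤ (∏ i, log ((t i + Δt i) / t i)) * ρ ((1 - ∑ i, t i) / t last) := by
        refine mul_le_mul_of_nonneg_right ?_ hρ₁
        simpa only [one_add_div (htpos _).ne'] using
          one_sub_mul_prod_le_prod_log_one_add hε0.le (fun i => div_nonneg (hΔt i) (htpos i).le)
            fun i => by simpa using hratio i
    _ ≤ _ := by
        rw [mul_comm]
        exact mul_prod_log_le_liminf_boxCount hρanti htmin htmin_le hΔt horder hsum
          (dickman _ (fun u hu' => hu.trans_le hu'.1) isCompact_Icc) mertens

open Classical in
theorem box_liminf_lower_bound (k : ℕ) (hk : 0 < k)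
    (ρ : ℝ → ℝ) (hρcont : ContinuousOn ρ (Ici 0))
    (hρpos : ∀ u : ℝ, 0 ≤ u → 0 < ρ u) (hρanti : AntitoneOn ρ (Ici 0))
    (dickman : ∀ K : Set ℝ, K ⊆ Ioi 0 → IsCompact K →
      TendstoUniformlyOn (fun (x : ℝ) (u : ℝ) => (Psi x (x ^ (1 / u)) : ℝ) / x)
        ρ atTop K)
    (c₀ : ℝ)
    (mertens : Tendsto (fun x : ℝ =>
        (∑ p ∈ (Finset.range (⌊x⌋₊ + 1)).filter Nat.Prime, (1 : ℝ) / p)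
          - c₀ - Real.log (Real.log x)) atTop (nhds 0))
    (ε : ℝ) (hε0 : 0 < ε) (hε1 : ε < 1)
    (t Δt : Fin k → ℝ) (hΔt : ∀ i, 0 ≤ Δt i)
    (U : Set (Fin k → ℝ))
    (hU : U = {x | (∀ i j : Fin k, i < j → x j < x i) ∧
        0 < x ⟨k - 1, Nat.sub_lt hk one_pos⟩ ∧ (∑ i, x i) < 1})
    (B : Set (Fin k → ℝ)) (hB : B = univ.pi fun i => Icc (t i) (t i + Δt i))
    (hBU : B ⊆ U)
    (hsep : (k / (2 * ε)) * Metric.diam B < setDist B Uᶜ) :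
    (1 - ε) * (∏ i, Δt i / t i)
        * ρ ((1 - ∑ i, t i) / t ⟨k - 1, Nat.sub_lt hk one_pos⟩) ≤
      atTop.liminf (fun n : ℕ =>
        (((Finset.Icc 1 n).filter (fun m => ∀ i : Fin k,
            t i ≤ Real.log (Pfac i m) / Real.log n ∧
            Real.log (Pfac i m) / Real.log n ≤ t i + Δt i)).card : ℝ) / n) :=
  box_liminf_lower_bound_general k hk ρ hρpos hρanti dickman c₀ mertens ε hε0 t Δt hΔt U hU B hB hBU
    hsep
end
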